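/- arXiv:2401.08197 — 4 statements merged into one kernel-verified Lean document; each statement's English description precedes it below -/
import Mathlib

section
/- Let n be a positive integer, let τ ∈ (0,1) be such that τn is a positive integer, let p ∈ (0,1/2), and let Y be a random variable with the Binomial(τn, p) distribution. Then for any c > 2e, P( Y ≥ c·n·p / log(1/τ) ) ≤ 2 · exp( −c·n·p / 2 ). -/
/-!
Chernoff's method with the exponent `t = log (1/τ)`, chosen so that `e^t = 1/τ`. The moment
generating function of `Binomial(N, p)` is `(1 - p + p e^t)^N ≤ exp (N p (e^t - 1))`, and with
`N = τ n` this is `exp (n p (1 - τ)) ≤ exp (n p)`. Markov's inequality at level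
`e^{t ε}`, `ε = c n p / t`, then gives `exp (n p - c n p)`, which is at most `exp (-c n p / 2)`
as soon as `c ≥ 2`.
-/

open MeasureTheory ProbabilityTheory
open scoped ENNReal NNReal

set_option linter.deprecated false

theorem measure_ge_le_exp_neg_mul_lintegral_exp {Ω : Type*} [MeasurableSpace Ω] {μ : Measure Ω}
    {X : Ω → ℝ} (hX : AEMeasurable X μ) {t : ℝ} (ht : 0 < t) (ε : ℝ) :
    μ {ω | ε ≤ X ω} ≤
      ENNReal.ofReal (Real.exp (-(t * ε))) * ∫⁻ ω, ENNReal.ofReal (Real.exp (t * X ω)) ∂μ := by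
  set level := ENNReal.ofReal (Real.exp (t * ε))
  have hsub : {ω | ε ≤ X ω} ⊆ {ω | level ≤ ENNReal.ofReal (Real.exp (t * X ω))} :=
    fun _ hω =>
      ENNReal.ofReal_le_ofReal (Real.exp_le_exp.mpr (mul_le_mul_of_nonneg_left hω ht.le))
  have hinv : ENNReal.ofReal (Real.exp (-(t * ε))) * level = 1 := by
    rw [← ENNReal.ofReal_mul (Real.exp_nonneg _), ← Real.exp_add, neg_add_cancel, Real.exp_zero,
      ENNReal.ofReal_one]
  calc μ {ω | ε ≤ X ω}
      ≤ ENNReal.ofReal (Real.exp (-(t * ε)))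
          * (level * μ {ω | level ≤ ENNReal.ofReal (Real.exp (t * X ω))}) := by
        rw [← mul_assoc, hinv, one_mul]
        exact measure_mono hsub
    _ ≤ _ := by
        gcongr
        exact mul_meas_ge_le_lintegral₀ (by fun_prop) level

theorem lintegral_exp_mul_binomial (p : ℝ≥0) (hp : p ≤ 1) (N : ℕ) (t : ℝ) :
    ∫⁻ k, ENNReal.ofReal (Real.exp (t * k)) ∂((PMF.binomial p hp N).map Fin.val).toMeasure
      = ENNReal.ofReal ((p * Real.exp t + (1 - p)) ^ N) := by
  have hq : (0 : ℝ) ≤ 1 - p := by simpa using hp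
  have hbase : ENNReal.ofReal (p * Real.exp t + (1 - p))
      = p * ENNReal.ofReal (Real.exp t) + (1 - p) := by
    rw [ENNReal.ofReal_add (by positivity) hq, ENNReal.ofReal_mul (NNReal.coe_nonneg p),
      ENNReal.ofReal_coe_nnreal, ← ENNReal.ofReal_one, ← ENNReal.ofReal_coe_nnreal,
      ENNReal.ofReal_sub _ (NNReal.coe_nonneg p)]
  rw [← PMF.toMeasure_map _ _ measurable_from_top,
    lintegral_map measurable_from_top measurable_from_top, lintegral_fintype,
    ENNReal.ofReal_pow (by positivity), hbase, add_pow, Finset.sum_fin_eq_sum_range]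
  refine Finset.sum_congr rfl fun i hi => ?_
  rw [dif_pos (Finset.mem_range.mp hi),
    PMF.toMeasure_apply_singleton _ _ (measurableSet_singleton _), PMF.binomial_apply, mul_comm t,
    Real.exp_nat_mul, ENNReal.ofReal_pow (Real.exp_nonneg _)]
  simp only [Fin.val_last]
  ring

theorem one_add_pow_le_exp_mul {y : ℝ} (hy : -1 ≤ y) (N : ℕ) :
    (1 + y) ^ N ≤ Real.exp (N * y) := by
  rw [Real.exp_nat_mul]
  gcongr
  · linarith
  · linarith [Real.add_one_le_exp y]

theorem lintegral_exp_mul_binomial_le (p : ℝ≥0) (hp : p ≤ 1) (N : ℕ) (t : ℝ) :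
    ∫⁻ k, ENNReal.ofReal (Real.exp (t * k)) ∂((PMF.binomial p hp N).map Fin.val).toMeasure
      ≤ ENNReal.ofReal (Real.exp (N * (p * (Real.exp t - 1)))) := by
  rw [lintegral_exp_mul_binomial]
  gcongr
  convert one_add_pow_le_exp_mul (y := p * (Real.exp t - 1)) ?_ N using 2
  · ring
  · have : (p : ℝ) ≤ 1 := hp
    nlinarith [Real.exp_pos t, p.2]

theorem binomial_tail_bound
    {Ω : Type*} [MeasurableSpace Ω] (μ : Measure Ω) [IsProbabilityMeasure μ]
    (n : ℕ) (τ : ℝ) (hτ : τ ∈ Set.Ioo (0:ℝ) 1)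
    (N : ℕ) (hτn : (N : ℝ) = τ * n)
    (p : ℝ) (hp : p ∈ Set.Ioo (0:ℝ) (1/2))
    (Y : Ω → ℕ) (hmY : Measurable Y)
    (hY : Measure.map Y μ =
      ((PMF.binomial (Real.toNNReal p)
          (Real.toNNReal_le_one.mpr (le_of_lt (lt_trans hp.2 (by norm_num)))) N).map
        Fin.val).toMeasure)
    (c : ℝ) (hc : 2 * Real.exp 1 < c) :
    μ {ω | c * n * p / Real.log (1 / τ) ≤ (Y ω : ℝ)}
      ≤ ENNReal.ofReal (2 * Real.exp (-(c * n * p) / 2)) := by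
  obtain ⟨hτ0, hτ1⟩ := hτ
  set t := Real.log (1 / τ)
  have ht : 0 < t := Real.log_pos (one_lt_one_div hτ0 hτ1)
  have hnp : 0 ≤ n * p := mul_nonneg n.cast_nonneg hp.1.le
  have hmgf :
      ∫⁻ ω, ENNReal.ofReal (Real.exp (t * Y ω)) ∂μ ≤ ENNReal.ofReal (Real.exp (n * p)) := by
    rw [← lintegral_map (f := fun k : ℕ => ENNReal.ofReal (Real.exp (t * k)))
      measurable_from_top hmY, hY]
    refine (lintegral_exp_mul_binomial_le _ _ N t).trans (ENNReal.ofReal_le_ofReal ?_)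
    rw [Real.coe_toNNReal _ hp.1.le, Real.exp_log (by positivity), hτn]
    calc Real.exp (τ * n * (p * (1 / τ - 1))) = Real.exp (n * p * (1 - τ)) := by field_simp
      _ ≤ Real.exp (n * p) :=
        Real.exp_le_exp.mpr (mul_le_of_le_one_right hnp (by linarith))
  have hexponent : -(t * (c * n * p / t)) + n * p ≤ -(c * n * p) / 2 := by
    rw [mul_div_cancel₀ _ ht.ne']
    nlinarith [Real.exp_one_gt_d9]
  calc μ {ω | c * n * p / t ≤ (Y ω : ℝ)}
      ≤ ENNReal.ofReal (Real.exp (-(t * (c * n * p / t)))) * ENNReal.ofReal (Real.exp (n * p)) :=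
        (measure_ge_le_exp_neg_mul_lintegral_exp (by fun_prop) ht _).trans (by gcongr)
    _ ≤ ENNReal.ofReal (2 * Real.exp (-(c * n * p) / 2)) := by
        rw [← ENNReal.ofReal_mul (Real.exp_nonneg _), ← Real.exp_add]
        gcongr
        linarith [Real.exp_le_exp.mpr hexponent, Real.exp_pos (-(c * n * p) / 2)]
end

section
/- Let V be a finite set, K a positive integer, H a finite collection of subsets of V, w : H → ℝ, and g : V × {1,…,K} → ℝ. For a labeling σ : V → {1,…,K}, define L(σ) ≜ Σ_{h ∈ H} w(h) · 1{σ is constant on h} + Σ_{v ∈ V} g(v, σ(v)). Let i₁ ≠ i₂ be two elements of V such that no h ∈ H contains both i₁ and i₂, fix labels k₁, k₂ ∈ {1,…,K}, and let σ₁, σ₂, σ₁₂ be σ with the label of i₁ changed to k₁, the label of i₂ changed to k₂, and both changes applied, respectively. If L(σ₁) ≥ L(σ) and L(σ₂) ≥ L(σ), then L(σ₁₂) ≥ L(σ). -/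
/-- The combinatorial log-likelihood of a labeling: weighted count of monochromatic
hyperedges plus per-vertex label scores. -/
noncomputable def clusterLL {V : Type*} [Fintype V] [DecidableEq V] {K : ℕ}
    (H : Finset (Finset V)) (w : Finset V → ℝ) (g : V → Fin K → ℝ)
    (σ : V → Fin K) : ℝ :=
  (∑ h ∈ H, if ∀ u ∈ h, ∀ v ∈ h, σ u = σ v then w h else 0) + ∑ v, g v (σ v)

private lemma ind_congr {V : Type*} [Fintype V] [DecidableEq V] {K : ℕ} (w : Finset V → ℝ)
    (σ τ : V → Fin K) (h : Finset V) (he : ∀ x ∈ h, σ x = τ x) :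
    (if ∀ u ∈ h, ∀ v ∈ h, σ u = σ v then w h else 0)
      = (if ∀ u ∈ h, ∀ v ∈ h, τ u = τ v then w h else 0) := by
  apply if_congr _ rfl rfl
  constructor
  · intro H u hu v hv; rw [← he u hu, ← he v hv]; exact H u hu v hv
  · intro H u hu v hv; rw [he u hu, he v hv]; exact H u hu v hv

theorem double_misclassification_likelihood
    {V : Type*} [Fintype V] [DecidableEq V] {K : ℕ} (hK : 0 < K)
    (H : Finset (Finset V)) (w : Finset V → ℝ) (g : V → Fin K → ℝ)
    (σ : V → Fin K) (i₁ i₂ : V) (hne : i₁ ≠ i₂)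
    (hsep : ∀ h ∈ H, ¬(i₁ ∈ h ∧ i₂ ∈ h)) (k₁ k₂ : Fin K)
    (h₁ : clusterLL H w g σ ≤ clusterLL H w g (Function.update σ i₁ k₁))
    (h₂ : clusterLL H w g σ ≤ clusterLL H w g (Function.update σ i₂ k₂)) :
    clusterLL H w g σ ≤
      clusterLL H w g (Function.update (Function.update σ i₁ k₁) i₂ k₂) := by
  set σ₁ := Function.update σ i₁ k₁ with hσ₁
  set σ₂ := Function.update σ i₂ k₂ with hσ₂
  set σ₁₂ := Function.update σ₁ i₂ k₂ with hσ₁₂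
  have key : clusterLL H w g σ₁₂ + clusterLL H w g σ
      = clusterLL H w g σ₁ + clusterLL H w g σ₂ := by
    unfold clusterLL
    have hsum : (∑ h ∈ H, if ∀ u ∈ h, ∀ v ∈ h, σ₁₂ u = σ₁₂ v then w h else 0)
        + (∑ h ∈ H, if ∀ u ∈ h, ∀ v ∈ h, σ u = σ v then w h else 0)
        = (∑ h ∈ H, if ∀ u ∈ h, ∀ v ∈ h, σ₁ u = σ₁ v then w h else 0)
        + (∑ h ∈ H, if ∀ u ∈ h, ∀ v ∈ h, σ₂ u = σ₂ v then w h else 0) := by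
      rw [← Finset.sum_add_distrib, ← Finset.sum_add_distrib]
      apply Finset.sum_congr rfl
      intro h hh
      by_cases hi2 : i₂ ∈ h
      · have hi1 : i₁ ∉ h := fun hi1 => hsep h hh ⟨hi1, hi2⟩
        have e1 : (if ∀ u ∈ h, ∀ v ∈ h, σ₁₂ u = σ₁₂ v then w h else 0)
            = (if ∀ u ∈ h, ∀ v ∈ h, σ₂ u = σ₂ v then w h else 0) := by
          refine ind_congr w σ₁₂ σ₂ h fun x hx => ?_
          by_cases hx2 : x = i₂
          · subst hx2; simp [hσ₁₂, hσ₂]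
          · rw [hσ₁₂, hσ₂, Function.update_of_ne hx2, Function.update_of_ne hx2, hσ₁,
              Function.update_of_ne (fun hx1 : x = i₁ => hi1 (hx1 ▸ hx))]
        have e2 : (if ∀ u ∈ h, ∀ v ∈ h, σ u = σ v then w h else 0)
            = (if ∀ u ∈ h, ∀ v ∈ h, σ₁ u = σ₁ v then w h else 0) := by
          refine ind_congr w σ σ₁ h fun x hx => ?_
          rw [hσ₁, Function.update_of_ne (fun hx1 : x = i₁ => hi1 (hx1 ▸ hx))]
        rw [e1, e2]; try ring
      · have e1 : (if ∀ u ∈ h, ∀ v ∈ h, σ₁₂ u = σ₁₂ v then w h else 0)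
            = (if ∀ u ∈ h, ∀ v ∈ h, σ₁ u = σ₁ v then w h else 0) := by
          refine ind_congr w σ₁₂ σ₁ h fun x hx => ?_
          rw [hσ₁₂, Function.update_of_ne (fun hx2 : x = i₂ => hi2 (hx2 ▸ hx))]
        have e2 : (if ∀ u ∈ h, ∀ v ∈ h, σ u = σ v then w h else 0)
            = (if ∀ u ∈ h, ∀ v ∈ h, σ₂ u = σ₂ v then w h else 0) := by
          refine ind_congr w σ σ₂ h fun x hx => ?_
          rw [hσ₂, Function.update_of_ne (fun hx2 : x = i₂ => hi2 (hx2 ▸ hx))]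
        rw [e1, e2]; try ring
    have hg : (∑ v, g v (σ₁₂ v)) + (∑ v, g v (σ v))
        = (∑ v, g v (σ₁ v)) + (∑ v, g v (σ₂ v)) := by
      rw [← Finset.sum_add_distrib, ← Finset.sum_add_distrib]
      apply Finset.sum_congr rfl
      intro v _
      by_cases hv2 : v = i₂
      · subst hv2; simp [hσ₁₂, hσ₂, hσ₁, hne.symm]; try ring
      · by_cases hv1 : v = i₁
        · subst hv1; simp [hσ₁₂, hσ₂, hσ₁, hne, hv2]; try ring
        · simp [hσ₁₂, hσ₂, hσ₁, hv1, hv2]; try ring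
    linarith
  linarith
end

section
/- Fix an integer W ≥ 2 and constants C_2, …, C_W > 0. For each n ≥ 2, consider a random hypergraph on vertex set [n] = {1,…,n} in which, for each d ∈ {2,…,W} and each d-element subset h of [n], the hyperedge h is present independently with some probability q_h ≤ C_d · log n / C(n−1, d−1), where C(·,·) denotes the binomial coefficient. Let r_n = ⌈n / (log n)³⌉, let T_n ⊆ [n] be any fixed subset with |T_n| = 4 r_n, and let T'_n be the set obtained from T_n by deleting every node that belongs to some present hyperedge containing at least two nodes of T_n. Then P( |T'_n| ≥ 3 r_n ) → 1 as n → ∞. -/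
/-!
A vertex of `T` is lost only if it lies in a present hyperedge `h` meeting `T` in at least two
vertices, and each such `h` accounts for at most `W` lost vertices. A `d`-set meeting `T` in two
points is a pair of `T` plus `d - 2` other points, so there are at most `|T|² C(n-2, d-2)` of them,
each present with probability at most `C_d log n / C(n-1, d-1)`, and
`C(n-2, d-2) / C(n-1, d-1) = (d-1)/(n-1)`. Markov's inequality therefore bounds the probability of
losing more than `r` vertices by `O(r log n / n) = O(1 / log² n)`.
-/

open MeasureTheory ProbabilityTheory Filter Finset
open scoped ENNReal Topology

/-- Equality holds for `d ≤ m`; for `d > m` both binomials vanish. -/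
theorem Nat.choose_sub_two_div_choose_sub_one_le (m : ℕ) {d : ℕ} (hd : 2 ≤ d) :
    ((m - 2).choose (d - 2) : ℝ) / (m - 1).choose (d - 1) ≤ ((d - 1 : ℕ) : ℝ) / (m - 1 : ℕ) := by
  rcases Nat.eq_zero_or_pos ((m - 1).choose (d - 1)) with h0 | hpos
  · rw [h0, Nat.cast_zero, div_zero]
    positivity
  have hm : 2 ≤ m := by
    by_contra! hm
    have : m - 1 < d - 1 := by omega
    exact hpos.ne' (Nat.choose_eq_zero_of_lt this)
  have hid := Nat.add_one_mul_choose_eq (m - 2) (d - 2)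
  rw [show m - 2 + 1 = m - 1 by omega, show d - 2 + 1 = d - 1 by omega] at hid
  rw [div_le_div_iff₀ (by exact_mod_cast hpos) (by norm_cast; omega)]
  norm_cast
  rw [mul_comm, hid, mul_comm]

section Hypergraph

variable {α : Type*} [Fintype α] [DecidableEq α]

def crossingEdges (W : ℕ) (T : Finset α) : Finset (Finset α) :=
  univ.filter fun h => (2 ≤ #h ∧ #h ≤ W) ∧ 2 ≤ #(h ∩ T)

def isolatedPart (W : ℕ) (e : Finset α → Bool) (T : Finset α) : Finset α :=
  T.filter fun v => ∀ h : Finset α, 2 ≤ #h → #h ≤ W → e h = true → v ∈ h → #(h ∩ T) < 2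

theorem card_le_choose_two_mul_choose {T : Finset α} {d : ℕ} {H : Finset (Finset α)}
    (hH : ∀ h ∈ H, #h = d ∧ 2 ≤ #(h ∩ T)) :
    #H ≤ (#T).choose 2 * (Fintype.card α - 2).choose (d - 2) := by
  have hsub : H ⊆ (T.powersetCard 2).biUnion
      fun p => ((univ \ p).powersetCard (d - 2)).image (p ∪ ·) := by
    intro h hh
    obtain ⟨hcard, hinter⟩ := hH h hh
    obtain ⟨p, hpT, hp⟩ := exists_subset_card_eq hinter
    have hph : p ⊆ h := hpT.trans inter_subset_left
    refine mem_biUnion.2 ⟨p, mem_powersetCard.2 ⟨hpT.trans inter_subset_right, hp⟩, ?_⟩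
    refine mem_image.2 ⟨h \ p, mem_powersetCard.2 ⟨sdiff_subset_sdiff (subset_univ h) le_rfl, ?_⟩,
      union_sdiff_of_subset hph⟩
    rw [card_sdiff_of_subset hph, hcard, hp]
  calc #H ≤ ∑ p ∈ T.powersetCard 2, #(((univ \ p).powersetCard (d - 2)).image (p ∪ ·)) :=
        (card_le_card hsub).trans card_biUnion_le
    _ ≤ ∑ p ∈ T.powersetCard 2, (Fintype.card α - 2).choose (d - 2) := by
        refine sum_le_sum fun p hp => card_image_le.trans ?_
        rw [card_powersetCard, card_sdiff_of_subset (subset_univ p), card_univ,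
          (mem_powersetCard.1 hp).2]
    _ = _ := by rw [sum_const, card_powersetCard, smul_eq_mul]

theorem card_le_card_isolatedPart_add (W : ℕ) (e : Finset α → Bool) (T : Finset α) :
    #T ≤ #(isolatedPart W e T) + W * #((crossingEdges W T).filter (e · = true)) := by
  have hcover : T.filter (· ∉ isolatedPart W e T) ⊆
      ((crossingEdges W T).filter (e · = true)).biUnion (· ∩ T) := by
    intro v hv
    obtain ⟨hvT, hv⟩ := mem_filter.1 hv
    simp only [isolatedPart, mem_filter, hvT, true_and, not_forall, not_lt] at hv
    obtain ⟨h, h2, hW, he, hvh, hT⟩ := hv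
    exact mem_biUnion.2 ⟨h, mem_filter.2 ⟨mem_filter.2 ⟨mem_univ h, ⟨h2, hW⟩, hT⟩, he⟩,
      mem_inter.2 ⟨hvh, hvT⟩⟩
  have hbad : #(T.filter (· ∉ isolatedPart W e T)) ≤
      W * #((crossingEdges W T).filter (e · = true)) := by
    calc _ ≤ ∑ h ∈ (crossingEdges W T).filter (e · = true), #(h ∩ T) :=
          (card_le_card hcover).trans card_biUnion_le
      _ ≤ ∑ h ∈ (crossingEdges W T).filter (e · = true), W := by
          refine sum_le_sum fun h hh => (card_le_card inter_subset_left).trans ?_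
          exact (mem_filter.1 (mem_filter.1 hh).1).2.1.2
      _ = _ := by rw [sum_const, smul_eq_mul, mul_comm]
  have hsplit := card_filter_add_card_filter_not (s := T) (· ∈ isolatedPart W e T)
  have hiso : T.filter (· ∈ isolatedPart W e T) = isolatedPart W e T :=
    filter_mem_eq_inter.trans (inter_eq_right.2 (filter_subset _ _))
  rw [hiso] at hsplit
  omega

theorem sum_crossingEdges_le (W : ℕ) (T : Finset α) (a : ℕ → ℝ)
    (ha : ∀ d ∈ Icc 2 W, 0 ≤ a d) :
    ∑ h ∈ crossingEdges W T, a #h / (Fintype.card α - 1).choose (#h - 1)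
      ≤ #T ^ 2 * (∑ d ∈ Icc 2 W, a d * (d - 1 : ℕ)) / (Fintype.card α - 1 : ℕ) := by
  set m := Fintype.card α
  have hmaps : ∀ h ∈ crossingEdges W T, #h ∈ Icc 2 W :=
    fun h hh => mem_Icc.2 (mem_filter.1 hh).2.1
  rw [← sum_fiberwise_of_maps_to hmaps, mul_sum, sum_div]
  refine sum_le_sum fun d hd => ?_
  have hfiber : (#{h ∈ crossingEdges W T | #h = d} : ℝ) ≤ #T ^ 2 * (m - 2).choose (d - 2) := by
    have hcount := card_le_choose_two_mul_choose (T := T) (d := d)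
      (H := {h ∈ crossingEdges W T | #h = d})
      fun h hh => ⟨(mem_filter.1 hh).2, (mem_filter.1 (mem_filter.1 hh).1).2.2⟩
    have hpair : (#T).choose 2 ≤ #T ^ 2 := Nat.choose_le_pow _ _
    exact_mod_cast hcount.trans (Nat.mul_le_mul_right _ hpair)
  have had := ha d hd
  calc ∑ h ∈ crossingEdges W T with #h = d, a #h / (m - 1).choose (#h - 1)
      = #{h ∈ crossingEdges W T | #h = d} * (a d / (m - 1).choose (d - 1)) := by
        rw [← nsmul_eq_mul, ← sum_const]
        exact sum_congr rfl fun h hh => by rw [(mem_filter.1 hh).2]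
    _ ≤ #T ^ 2 * a d * ((m - 2).choose (d - 2) / (m - 1).choose (d - 1)) := by
        rw [mul_div_assoc', mul_div_assoc']
        exact div_le_div_of_nonneg_right (by nlinarith) (by positivity)
    _ ≤ #T ^ 2 * a d * ((d - 1 : ℕ) / (m - 1 : ℕ)) :=
        mul_le_mul_of_nonneg_left
          (Nat.choose_sub_two_div_choose_sub_one_le m (mem_Icc.1 hd).1) (by positivity)
    _ = _ := by ring

end Hypergraph

theorem mul_meas_ge_mul_card_filter_le {ι Ω : Type*} [MeasurableSpace Ω] (μ : Measure Ω)
    (s : Finset ι) {X : ι → Ω → Bool} (hX : ∀ i, Measurable (X i)) (c k : ℝ≥0∞) :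
    k * μ {ω | k ≤ c * #(s.filter (X · ω = true))} ≤ c * ∑ i ∈ s, μ {ω | X i ω = true} := by
  have hA : ∀ i, MeasurableSet {ω | X i ω = true} := fun i => hX i (measurableSet_singleton true)
  have hcount : ∀ ω, c * #(s.filter (X · ω = true)) =
      ∑ i ∈ s, {ω | X i ω = true}.indicator (fun _ => c) ω := by
    intro ω
    rw [card_filter, Nat.cast_sum, mul_sum]
    refine sum_congr rfl fun i _ => ?_
    by_cases hi : X i ω = true <;> simp [hi]
  simp_rw [hcount]
  refine (mul_meas_ge_le_lintegral₀ ?_ k).trans_eq ?_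
  · exact (Finset.measurable_sum _ fun i _ => measurable_const.indicator (hA i)).aemeasurable
  · rw [lintegral_finsetSum _ fun i _ => measurable_const.indicator (hA i), mul_sum]
    exact sum_congr rfl fun i _ => lintegral_indicator_const (hA i) c

theorem measure_card_isolatedPart_lt_le {Ω : Type*} [MeasurableSpace Ω] (μ : Measure Ω)
    {n : ℕ} (W : ℕ) (C : ℕ → ℝ) (hC : ∀ d ∈ Icc 2 W, 0 < C d)
    {E : Finset (Fin n) → Ω → Bool} (hmeas : ∀ h, Measurable (E h))
    (hprob : ∀ h : Finset (Fin n), 2 ≤ #h → #h ≤ W →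
      μ {ω | E h ω = true} ≤ ENNReal.ofReal (C #h * Real.log n / (n - 1).choose (#h - 1)))
    {r : ℕ} {T : Finset (Fin n)} (hT : #T = 4 * r) :
    μ {ω | #(isolatedPart W (E · ω) T) < 3 * r} ≤ ENNReal.ofReal
      (16 * W * (∑ d ∈ Icc 2 W, C d * (d - 1 : ℕ)) * (r * Real.log n / (n - 1 : ℕ))) := by
  set K := ∑ d ∈ Icc 2 W, C d * (d - 1 : ℕ)
  set H := crossingEdges W T
  have hlog : 0 ≤ Real.log n := Real.log_natCast_nonneg n
  have hexpected : ∑ h ∈ H, μ {ω | E h ω = true}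
      ≤ ENNReal.ofReal ((4 * r) ^ 2 * (K * Real.log n) / (n - 1 : ℕ)) := by
    have hsum := sum_crossingEdges_le W T (C · * Real.log n)
      fun d hd => mul_nonneg (hC d hd).le hlog
    simp only [Fintype.card_fin, hT, mul_right_comm _ (Real.log n), ← sum_mul] at hsum
    have hH : ∀ h ∈ H, 2 ≤ #h ∧ #h ≤ W := fun h hh => (mem_filter.1 hh).2.1
    refine le_trans ?_ (ENNReal.ofReal_le_ofReal (by exact_mod_cast hsum))
    rw [ENNReal.ofReal_sum_of_nonneg fun h hh => by
      have := hC _ (mem_Icc.2 (hH h hh))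
      positivity]
    exact sum_le_sum fun h hh => hprob h (hH h hh).1 (hH h hh).2
  have hbad : {ω | #(isolatedPart W (E · ω) T) < 3 * r}
      ⊆ {ω | ((r + 1 : ℕ) : ℝ≥0∞) ≤ W * #(H.filter (E · ω = true))} := by
    intro ω hω
    have : #T ≤ #(isolatedPart W (E · ω) T) + W * #(H.filter (E · ω = true)) :=
      card_le_card_isolatedPart_add W (E · ω) T
    simp only [Set.mem_ofPred_eq] at hω ⊢
    exact_mod_cast (by omega : r + 1 ≤ W * #(H.filter (E · ω = true)))
  have hmarkov := (mul_le_mul_right (measure_mono hbad) _).trans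
    (mul_meas_ge_mul_card_filter_le μ H hmeas W _)
  refine (ENNReal.mul_le_mul_iff_right (a := ((r + 1 : ℕ) : ℝ≥0∞)) (by simp) (by simp)).1 ?_
  refine hmarkov.trans ((mul_le_mul_right hexpected _).trans ?_)
  rw [← ENNReal.ofReal_natCast, ← ENNReal.ofReal_mul (by positivity),
    ← ENNReal.ofReal_natCast, ← ENNReal.ofReal_mul (by positivity)]
  refine ENNReal.ofReal_le_ofReal ?_
  have hK : 0 ≤ K := sum_nonneg fun d hd => mul_nonneg (hC d hd).le (Nat.cast_nonneg _)
  calc (W : ℝ) * ((4 * r) ^ 2 * (K * Real.log n) / (n - 1 : ℕ))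
      = (r : ℝ) ^ 2 * (16 * W * K * Real.log n / (n - 1 : ℕ)) := by ring
    _ ≤ ((r + 1 : ℕ) : ℝ) * r * (16 * W * K * Real.log n / (n - 1 : ℕ)) := by
        gcongr
        push_cast
        nlinarith
    _ = _ := by ring

theorem tendsto_natCeil_div_log_pow_three_mul_log_div :
    Tendsto (fun n : ℕ => ⌈(n : ℝ) / Real.log n ^ 3⌉₊ * Real.log n / (n - 1 : ℕ))
      atTop (𝓝 0) := by
  have hlog : Tendsto (fun n : ℕ => Real.log n) atTop atTop :=
    Real.tendsto_log_atTop.comp tendsto_natCast_atTop_atTop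
  have hinv : Tendsto (fun n : ℕ => 2 / Real.log n ^ 2) atTop (𝓝 0) := by
    simpa [div_eq_mul_inv] using
      ((tendsto_inv_atTop_zero.comp ((tendsto_pow_atTop two_ne_zero).comp hlog)).const_mul 2)
  have hlogdiv : Tendsto (fun n : ℕ => 2 * (Real.log n / n)) atTop (𝓝 0) := by
    simpa using (Real.isLittleO_log_id_atTop.tendsto_div_nhds_zero.comp
      tendsto_natCast_atTop_atTop).const_mul 2
  refine tendsto_of_tendsto_of_tendsto_of_le_of_le' tendsto_const_nhds
    (by simpa using hinv.add hlogdiv) (Eventually.of_forall fun n => by positivity) ?_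
  filter_upwards [eventually_ge_atTop 2] with n hn
  have hn' : (2 : ℝ) ≤ n := by exact_mod_cast hn
  have hL : 0 < Real.log n := Real.log_pos (by linarith)
  have hceil : (⌈(n : ℝ) / Real.log n ^ 3⌉₊ : ℝ) ≤ n / Real.log n ^ 3 + 1 :=
    (Nat.ceil_lt_add_one (by positivity)).le
  have hhalf : (n : ℝ) / 2 ≤ (n - 1 : ℕ) := by
    rw [Nat.cast_sub (by omega)]
    push_cast
    linarith
  calc (⌈(n : ℝ) / Real.log n ^ 3⌉₊ : ℝ) * Real.log n / (n - 1 : ℕ)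
      ≤ (n / Real.log n ^ 3 + 1) * Real.log n / (n / 2) := by
        gcongr
    _ = 2 / Real.log n ^ 2 + 2 * (Real.log n / n) := by
        field_simp

theorem tendsto_measure_of_tendsto_measure_compl {ι : Type*} {l : Filter ι} {Ω : ι → Type*}
    [∀ i, MeasurableSpace (Ω i)] {μ : ∀ i, Measure (Ω i)} [∀ i, IsProbabilityMeasure (μ i)]
    {s : ∀ i, Set (Ω i)} (h : Tendsto (fun i => μ i (s i)ᶜ) l (𝓝 0)) :
    Tendsto (fun i => μ i (s i)) l (𝓝 1) := by
  have hlower : Tendsto (fun i => 1 - μ i (s i)ᶜ) l (𝓝 1) := by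
    simpa using ENNReal.Tendsto.sub tendsto_const_nhds h (Or.inl ENNReal.one_ne_top)
  refine tendsto_of_tendsto_of_tendsto_of_le_of_le hlower tendsto_const_nhds (fun i => ?_)
    fun i => prob_le_one
  rw [tsub_le_iff_right, ← measure_univ (μ := μ i)]
  exact measure_univ_le_add_compl _

theorem sparse_hypergraph_isolated_set_general
    (W : ℕ) (C : ℕ → ℝ) (hC : ∀ d ∈ Finset.Icc 2 W, 0 < C d)
    (Ω : ℕ → Type*) [∀ n, MeasurableSpace (Ω n)]
    (μ : ∀ n, Measure (Ω n)) [∀ n, IsProbabilityMeasure (μ n)]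
    (E : ∀ n, Finset (Fin n) → Ω n → Bool)
    (hmeas : ∀ n h, Measurable (E n h))
    (hprob : ∀ n, 2 ≤ n → ∀ h : Finset (Fin n), 2 ≤ h.card → h.card ≤ W →
      μ n {ω | E n h ω = true}
        ≤ ENNReal.ofReal (C h.card * Real.log n / ((n - 1).choose (h.card - 1))))
    (r : ℕ → ℕ) (hr : ∀ n, r n = ⌈(n : ℝ) / (Real.log n) ^ 3⌉₊)
    (T : ∀ n, Finset (Fin n)) (hT : ∀ᶠ n in atTop, (T n).card = 4 * r n) :
    Tendsto (fun n => μ n {ω | 3 * r n ≤ ((T n).filter (fun v =>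
        ∀ h : Finset (Fin n), 2 ≤ h.card → h.card ≤ W → E n h ω = true →
          v ∈ h → (h ∩ T n).card < 2)).card})
      atTop (nhds 1) := by
  set K := ∑ d ∈ Icc 2 W, C d * (d - 1 : ℕ)
  have hbound : ∀ᶠ n in atTop, μ n {ω | 3 * r n ≤ #(isolatedPart W (E n · ω) (T n))}ᶜ
      ≤ ENNReal.ofReal (16 * W * K * (r n * Real.log n / (n - 1 : ℕ))) := by
    filter_upwards [hT, eventually_ge_atTop 2] with n hTn hn
    simpa only [Set.compl_ofPred, not_le] using
      measure_card_isolatedPart_lt_le (μ n) W C hC (hmeas n) (hprob n hn) hTn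
  have hlim : Tendsto (fun n => ENNReal.ofReal (16 * W * K * (r n * Real.log n / (n - 1 : ℕ))))
      atTop (𝓝 0) := by
    simpa [hr] using ENNReal.tendsto_ofReal
      (tendsto_natCeil_div_log_pow_three_mul_log_div.const_mul (16 * W * K))
  exact tendsto_measure_of_tendsto_measure_compl (tendsto_of_tendsto_of_tendsto_of_le_of_le'
    tendsto_const_nhds hlim (Eventually.of_forall fun n => zero_le) hbound)

theorem sparse_hypergraph_isolated_set
    (W : ℕ) (hW : 2 ≤ W) (C : ℕ → ℝ) (hC : ∀ d ∈ Finset.Icc 2 W, 0 < C d)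
    (Ω : ℕ → Type*) [∀ n, MeasurableSpace (Ω n)]
    (μ : ∀ n, Measure (Ω n)) [∀ n, IsProbabilityMeasure (μ n)]
    (E : ∀ n, Finset (Fin n) → Ω n → Bool)
    (hmeas : ∀ n h, Measurable (E n h))
    (hprob : ∀ n, 2 ≤ n → ∀ h : Finset (Fin n), 2 ≤ h.card → h.card ≤ W →
      μ n {ω | E n h ω = true}
        ≤ ENNReal.ofReal (C h.card * Real.log n / ((n - 1).choose (h.card - 1))))
    (hindep : ∀ n, iIndepFun
      (fun h : {h : Finset (Fin n) // 2 ≤ h.card ∧ h.card ≤ W} => E n h.1) (μ n))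
    (r : ℕ → ℕ) (hr : ∀ n, r n = ⌈(n : ℝ) / (Real.log n) ^ 3⌉₊)
    (T : ∀ n, Finset (Fin n)) (hT : ∀ᶠ n in atTop, (T n).card = 4 * r n) :
    Tendsto (fun n => μ n {ω | 3 * r n ≤ ((T n).filter (fun v =>
        ∀ h : Finset (Fin n), 2 ≤ h.card → h.card ≤ W → E n h ω = true →
          v ∈ h → (h ∩ T n).card < 2)).card})
      atTop (nhds 1) :=
  sparse_hypergraph_isolated_set_general W C hC Ω μ E hmeas hprob r hr T hT
end

section
/- Fix θ ∈ [0,1/2), a real ε > 0, and an integer K ≥ 2. Let (m_n) be a sequence of positive integers with m_n → ∞, let (η_n) be a sequence in (0, 1/(2K)) with η_n → 0, and let (p_n) be a sequence in (0,1/2) such that n · p_n · I_θ ≥ (1+ε) · K · log m_n for all n. For each n, let {P_i : 1 ≤ i ≤ ⌊(1/K − η_n) n⌋}, {P'_i : 1 ≤ i ≤ ⌈η_n n⌉}, and {Θ_i : 1 ≤ i ≤ ⌊(1/K − η_n) n⌋} be mutually independent with P_i ~ Bern(p_n), P'_i ~ Bern(p_n), Θ_i ~ Bern(θ). Then m_n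 · P( Σ_{i=1}^{⌊(1/K − η_n) n⌋} P_i (1 − 2Θ_i) ≤ Σ_{i=1}^{⌈η_n n⌉} P'_i ) → 0 as n → ∞. -/
open MeasureTheory ProbabilityTheory Filter
open scoped ENNReal

/-- The Bernoulli distribution on `ℝ` with mean `q`. -/
noncomputable def bern (q : ℝ) : Measure ℝ :=
  (ENNReal.ofReal q) • Measure.dirac 1 + (ENNReal.ofReal (1 - q)) • Measure.dirac 0

/-- `I_θ = (√(1-θ) - √θ)²`. -/
noncomputable def IθQ (θ : ℝ) : ℝ := (Real.sqrt (1 - θ) - Real.sqrt θ) ^ 2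

/-!
Chernoff bound. Write `S = ∑ Pᵢ (1 - 2Θᵢ)` over `N ≈ n / K` indices and `T = ∑ P'ⱼ` over
`M ≈ η n` indices. For `t ≥ 0`, Markov's inequality for `exp (t (T - S))` gives
`ℙ(S ≤ T) ≤ (1 - p g(t))^N (1 + p (eᵗ - 1))^M ≤ exp (p ((eᵗ - 1) M - g(t) N))`, where
`g(t) = 1 - θ eᵗ - (1 - θ) e⁻ᵗ`; the expectation factorises once the coordinates of the product
law are regrouped into the independent pairs `(Pᵢ, Θᵢ)` and the singles `P'ⱼ`. Since
`sup_{t ≥ 0} g = I_θ`, some `t` has `(1 + ε) g(t) > I_θ`; as `η → 0` and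
`n p I_θ ≥ (1 + ε) K log m`, the exponent is then at most `-(1 + κ) log m + O(1)` for a `κ > 0`,
so `m ℙ(S ≤ T) → 0`.
-/

open Real

section Bernoulli

variable {q : ℝ}

instance : IsFiniteMeasure (bern q) :=
  ⟨by simp [bern]⟩

lemma isProbabilityMeasure_bern (hq₀ : 0 ≤ q) (hq₁ : q ≤ 1) : IsProbabilityMeasure (bern q) := by
  constructor
  simp [bern, ← ENNReal.ofReal_add hq₀ (sub_nonneg.2 hq₁)]

lemma integrable_bern {E : Type*} [NormedAddCommGroup E] (f : ℝ → E) : Integrable f (bern q) :=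
  ((integrable_dirac enorm_lt_top).smul_measure ENNReal.ofReal_ne_top).add_measure
    ((integrable_dirac enorm_lt_top).smul_measure ENNReal.ofReal_ne_top)

lemma integral_bern (hq₀ : 0 ≤ q) (hq₁ : q ≤ 1) (f : ℝ → ℝ) :
    ∫ x, f x ∂bern q = q * f 1 + (1 - q) * f 0 := by
  rw [bern, integral_add_measure
    ((integrable_dirac enorm_lt_top).smul_measure ENNReal.ofReal_ne_top)
    ((integrable_dirac enorm_lt_top).smul_measure ENNReal.ofReal_ne_top),
    integral_smul_measure, integral_smul_measure, integral_dirac, integral_dirac,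
    ENNReal.toReal_ofReal hq₀, ENNReal.toReal_ofReal (sub_nonneg.2 hq₁), smul_eq_mul, smul_eq_mul]

lemma integrable_bern_prod_bern {q' : ℝ} {f : ℝ × ℝ → ℝ} (hf : Measurable f) :
    Integrable f ((bern q).prod (bern q')) :=
  (integrable_prod_iff hf.aestronglyMeasurable).2
    ⟨ae_of_all _ fun _ => integrable_bern _, integrable_bern _⟩

end Bernoulli

section Rearrangement

variable {ι κ X : Type*} [MeasurableSpace X]

def sumElimPairs (w : (ι → X × X) × (κ → X)) : ι ⊕ (κ ⊕ ι) → X :=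
  Sum.elim (fun i => (w.1 i).1) (Sum.elim w.2 fun i => (w.1 i).2)

lemma measurable_sumElimPairs : Measurable (sumElimPairs (ι := ι) (κ := κ) (X := X)) := by
  refine measurable_pi_lambda _ ?_
  rintro (i | j | i)
  · exact ((measurable_pi_apply i).comp measurable_fst).fst
  · exact (measurable_pi_apply j).comp measurable_snd
  · exact ((measurable_pi_apply i).comp measurable_fst).snd

lemma measurePreserving_sumElimPairs [Fintype ι] [Fintype κ] (μ ν ξ : Measure X)
    [SigmaFinite μ] [SigmaFinite ν] [SigmaFinite ξ] :
    MeasurePreserving sumElimPairs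
      ((Measure.pi fun _ : ι => μ.prod ν).prod (Measure.pi fun _ : κ => ξ))
      (Measure.pi (Sum.elim (fun _ : ι => μ) (Sum.elim (fun _ : κ => ξ) fun _ : ι => ν))) := by
  have : ∀ k, SigmaFinite
      (Sum.elim (fun _ : ι => μ) (Sum.elim (fun _ : κ => ξ) fun _ : ι => ν) k) := by
    rintro (i | j | i) <;> assumption
  refine ⟨measurable_sumElimPairs, (Measure.pi_eq fun s hs => ?_).symm⟩
  have hpre : sumElimPairs ⁻¹' Set.univ.pi s =
      (Set.univ.pi fun i => s (.inl i) ×ˢ s (.inr (.inr i))) ×ˢ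
        Set.univ.pi fun j => s (.inr (.inl j)) := by
    ext w
    simp only [sumElimPairs, Set.mem_preimage, Set.mem_pi, Set.mem_univ, true_implies, Sum.forall,
      Set.mem_prod, Sum.elim_inl, Sum.elim_inr, forall_and]
    tauto
  rw [Measure.map_apply measurable_sumElimPairs (.univ_pi hs), hpre, Measure.prod_prod,
    Measure.pi_pi, Measure.pi_pi, Fintype.prod_sum_type, Fintype.prod_sum_type]
  simp only [Sum.elim_inl, Sum.elim_inr, Measure.prod_prod, Finset.prod_mul_distrib]
  ring

end Rearrangement

/-- `1 - 𝔼 exp (-t (1 - 2Θ))` for `Θ ∼ bern θ`; its supremum over `t ≥ 0` is `IθQ θ`. -/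
noncomputable def bernGap (θ t : ℝ) : ℝ := 1 - (θ * exp t + (1 - θ) * exp (-t))

lemma measureReal_signedVote_le {ι κ : Type*} [Fintype ι] [Fintype κ] {p θ t : ℝ}
    (hp₀ : 0 ≤ p) (hp₁ : p ≤ 1) (hθ₀ : 0 ≤ θ) (hθ₁ : θ ≤ 1) (ht : 0 ≤ t) :
    ((Measure.pi fun _ : ι => (bern p).prod (bern θ)).prod (Measure.pi fun _ : κ => bern p)).real
        {w | ∑ i, (w.1 i).1 * (1 - 2 * (w.1 i).2) ≤ ∑ j, w.2 j}
      ≤ (1 - p * bernGap θ t) ^ Fintype.card ι * (1 + p * (exp t - 1)) ^ Fintype.card κ := by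
  have := isProbabilityMeasure_bern hp₀ hp₁
  have := isProbabilityMeasure_bern hθ₀ hθ₁
  set Y : (ι → ℝ × ℝ) × (κ → ℝ) → ℝ := fun w => ∑ j, w.2 j - ∑ i, (w.1 i).1 * (1 - 2 * (w.1 i).2)
  set u : ℝ × ℝ → ℝ := fun z => exp (-t * (z.1 * (1 - 2 * z.2)))
  set v : ℝ → ℝ := fun b => exp (t * b)
  have hevent : {w : (ι → ℝ × ℝ) × (κ → ℝ) | ∑ i, (w.1 i).1 * (1 - 2 * (w.1 i).2) ≤ ∑ j, w.2 j}
      = {w | 0 ≤ Y w} := by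
    ext w; simp [Y]
  have hfactor : (fun w => exp (t * Y w)) = fun w => (∏ i, u (w.1 i)) * ∏ j, v (w.2 j) := by
    ext w
    simp only [u, v, ← exp_sum, ← exp_add]
    congr 1
    simp only [Y, ← Finset.mul_sum]
    ring
  have hint : Integrable (fun w => exp (t * Y w))
      ((Measure.pi fun _ : ι => (bern p).prod (bern θ)).prod (Measure.pi fun _ : κ => bern p)) := by
    rw [hfactor]
    exact (Integrable.fintype_prod fun _ => integrable_bern_prod_bern (by fun_prop)).mul_prod
      (Integrable.fintype_prod fun _ => integrable_bern _)
  have hu : ∫ z, u z ∂(bern p).prod (bern θ) = 1 - p * bernGap θ t := by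
    rw [integral_prod u (integrable_bern_prod_bern (by fun_prop))]
    simp only [integral_bern hθ₀ hθ₁, integral_bern hp₀ hp₁, u, bernGap]
    norm_num
    ring
  have hv : ∫ b, v b ∂bern p = 1 + p * (exp t - 1) := by
    simp only [integral_bern hp₀ hp₁, v]
    norm_num
    ring
  calc _ = _ := by rw [hevent]
    _ ≤ exp (-t * 0) * mgf Y _ t := measure_ge_le_exp_mul_mgf 0 ht hint
    _ = _ := by
      rw [mgf, hfactor, integral_prod_mul (fun a : ι → ℝ × ℝ => ∏ i, u (a i))
        (fun b : κ → ℝ => ∏ j, v (b j)), integral_fintype_prod_eq_pow,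
        integral_fintype_prod_eq_pow, hu, hv]
      simp

lemma measureReal_signedVote_le_of_iIndepFun {Ω : Type*} [MeasurableSpace Ω] {μ : Measure Ω}
    {N M : ℕ} {P P' Θv : ℕ → Ω → ℝ} {p θ t : ℝ}
    (hp₀ : 0 ≤ p) (hp₁ : p ≤ 1) (hθ₀ : 0 ≤ θ) (hθ₁ : θ ≤ 1) (ht : 0 ≤ t)
    (hP : ∀ i < N, μ.map (P i) = bern p) (hP' : ∀ i < M, μ.map (P' i) = bern p)
    (hΘ : ∀ i < N, μ.map (Θv i) = bern θ)
    (hindep : iIndepFun (Sum.elim (fun i : Fin N => P i)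
      (Sum.elim (fun i : Fin M => P' i) fun i : Fin N => Θv i)) μ) :
    μ.real {ω | ∑ i ∈ Finset.range N, P i ω * (1 - 2 * Θv i ω) ≤ ∑ i ∈ Finset.range M, P' i ω}
      ≤ (1 - p * bernGap θ t) ^ N * (1 + p * (exp t - 1)) ^ M := by
  have := isProbabilityMeasure_bern hp₀ hp₁
  have := isProbabilityMeasure_bern hθ₀ hθ₁
  set X := Sum.elim (fun i : Fin N => P i) (Sum.elim (fun i : Fin M => P' i) fun i : Fin N => Θv i)
  set q := Sum.elim (fun _ : Fin N => bern p) (Sum.elim (fun _ : Fin M => bern p) fun _ => bern θ)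
  have hlaw : ∀ k, μ.map (X k) = q k := by
    rintro (i | j | i)
    exacts [hP i i.isLt, hP' j j.isLt, hΘ i i.isLt]
  have hmeas : ∀ k, AEMeasurable (X k) μ := fun k =>
    .of_map_ne_zero <| by
      rw [hlaw k]
      rcases k with _ | _ | _ <;> exact IsProbabilityMeasure.ne_zero (bern _)
  have hjoint : μ.map (fun ω k => X k ω) = Measure.pi q := by
    rw [hindep.map_fun_eq_pi_map hmeas]
    exact congrArg Measure.pi (funext hlaw)
  have hevent : {ω | ∑ i ∈ Finset.range N, P i ω * (1 - 2 * Θv i ω) ≤ ∑ i ∈ Finset.range M, P' i ω}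
      = (fun ω k => X k ω) ⁻¹' {x | ∑ i : Fin N, x (.inl i) * (1 - 2 * x (.inr (.inr i)))
        ≤ ∑ j : Fin M, x (.inr (.inl j))} := by
    ext ω
    simp [X, Finset.sum_range]
  have hD : MeasurableSet {x : Fin N ⊕ (Fin M ⊕ Fin N) → ℝ |
      ∑ i, x (.inl i) * (1 - 2 * x (.inr (.inr i))) ≤ ∑ j, x (.inr (.inl j))} :=
    measurableSet_le (by fun_prop) (by fun_prop)
  rw [hevent, ← map_measureReal_apply_of_aemeasurable (aemeasurable_pi_lambda _ hmeas) hD, hjoint,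
    ← (measurePreserving_sumElimPairs (bern p) (bern θ) (bern p)).measureReal_preimage
      hD.nullMeasurableSet]
  simpa [sumElimPairs] using measureReal_signedVote_le hp₀ hp₁ hθ₀ hθ₁ ht (ι := Fin N) (κ := Fin M)

lemma IθQ_pos {θ : ℝ} (hθ₀ : 0 ≤ θ) (hθ : θ < 1 / 2) : 0 < IθQ θ :=
  pow_pos (sub_pos.2 (sqrt_lt_sqrt hθ₀ (by linarith))) 2

lemma bernGap_le_one {θ : ℝ} (hθ₀ : 0 ≤ θ) (hθ₁ : θ ≤ 1) (t : ℝ) : bernGap θ t ≤ 1 := by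
  have := exp_pos t
  have := exp_pos (-t)
  unfold bernGap
  nlinarith

lemma exists_lt_bernGap {θ r : ℝ} (hθ₀ : 0 ≤ θ) (hθ : θ ≤ 1 / 2) (hr : r < IθQ θ) :
    ∃ t, 0 ≤ t ∧ r < bernGap θ t := by
  rcases hθ₀.eq_or_lt with rfl | hθpos
  · have hlim : Tendsto (fun t => bernGap 0 t) atTop (nhds 1) := by
      simpa [bernGap] using tendsto_exp_neg_atTop_nhds_zero.const_sub 1
    have hr1 : r < 1 := by simpa [IθQ] using hr
    exact ((eventually_ge_atTop 0).and (hlim.eventually (lt_mem_nhds hr1))).exists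
  · -- `eᵗ = √(1 - θ) / √θ` minimises `θ eᵗ + (1 - θ) e⁻ᵗ`, with minimum `2 √θ √(1 - θ)`
    have hs : 0 < √θ := sqrt_pos.2 hθpos
    have hs' : 0 < √(1 - θ) := sqrt_pos.2 (by linarith)
    have hle : √θ ≤ √(1 - θ) := sqrt_le_sqrt (by linarith)
    refine ⟨log (√(1 - θ) / √θ), log_nonneg ((one_le_div hs).2 hle), hr.trans_eq ?_⟩
    have hsq : √θ ^ 2 = θ := sq_sqrt hθ₀
    have hsq' : √(1 - θ) ^ 2 = 1 - θ := sq_sqrt (by linarith)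
    rw [bernGap, exp_neg, exp_log (div_pos hs' hs), IθQ]
    field_simp
    nlinarith

lemma one_add_pow_le_exp {x : ℝ} (hx : -1 ≤ x) (n : ℕ) : (1 + x) ^ n ≤ exp (n * x) :=
  (pow_le_pow_left₀ (by linarith) (by linarith [add_one_le_exp x]) n).trans_eq
    (exp_nat_mul x n).symm

lemma one_sub_pow_mul_one_add_pow_le_exp {x y : ℝ} (hx : x ≤ 1) (hy : 0 ≤ y) (N M : ℕ) :
    (1 - x) ^ N * (1 + y) ^ M ≤ exp (y * M - x * N) := by
  calc (1 - x) ^ N * (1 + y) ^ M ≤ exp (N * -x) * exp (M * y) := by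
        rw [sub_eq_add_neg]
        exact mul_le_mul (one_add_pow_le_exp (by linarith) N) (one_add_pow_le_exp (by linarith) M)
          (by positivity) (exp_pos _).le
    _ = exp (y * M - x * N) := by rw [← exp_add]; ring_nf

lemma tendsto_natCast_mul_exp_of_le {m : ℕ → ℕ} (hm : Tendsto m atTop atTop) {f : ℕ → ℝ}
    {κ C : ℝ} (hκ : 0 < κ) (hf : ∀ᶠ n in atTop, f n ≤ -(1 + κ) * log (m n) + C) :
    Tendsto (fun n => (m n : ℝ) * exp (f n)) atTop (nhds 0) := by
  have hlog : Tendsto (fun n => log (m n)) atTop atTop :=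
    tendsto_log_atTop.comp (tendsto_natCast_atTop_atTop.comp hm)
  have hsum : Tendsto (fun n => log (m n) + f n) atTop atBot :=
    tendsto_atBot_mono' _ (hf.mono fun n hn => by linarith)
      (tendsto_atBot_add_const_right _ C (hlog.const_mul_atTop_of_neg (neg_lt_zero.2 hκ)))
  refine (tendsto_exp_atBot.comp hsum).congr' ?_
  filter_upwards [hm.eventually_gt_atTop 0] with n hn
  rw [Function.comp_apply, exp_add, exp_log (by exact_mod_cast hn)]

lemma eventually_signedVote_exponent_le {K : ℕ} (hK : 0 < K) {a b I ε : ℝ} (hI : 0 < I)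
    (hε : 0 < ε) (ha : I < (1 + ε) * a) (hb : 0 ≤ b) {η p L : ℕ → ℝ} (hη : ∀ n, 0 ≤ η n)
    (hη0 : Tendsto η atTop (nhds 0)) (hp₀ : ∀ n, 0 ≤ p n) (hp₁ : ∀ n, p n ≤ 1)
    (hL : ∀ n, (1 + ε) * K * L n ≤ n * p n * I) :
    ∃ κ > 0, ∃ C, ∀ᶠ n in atTop,
      p n * (b * ⌈η n * n⌉₊ - a * ⌊(1 / K - η n) * n⌋₊) ≤ -(1 + κ) * L n + C := by
  have hK' : (0 : ℝ) < K := Nat.cast_pos.2 hK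
  have ha₀ : 0 < a := pos_of_mul_pos_right (hI.trans ha) (by linarith)
  set δ := ((1 + ε) * a - I) / (2 * K * (1 + ε))
  have hδ : 0 < δ := div_pos (by linarith) (by positivity)
  set κ := ((1 + ε) * a - I) / (2 * I)
  have hrate : (1 + ε) * K * (a / K - δ) = (1 + κ) * I := by
    simp only [δ, κ]; field_simp; ring
  have hκ : 0 < κ := div_pos (by linarith) (by positivity)
  refine ⟨κ, hκ, a + b, ?_⟩
  have hsmall : ∀ᶠ n in atTop, (a + b) * η n ≤ δ := by
    simpa using (hη0.const_mul (a + b)).eventually (eventually_le_nhds (by simpa using hδ))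
  filter_upwards [hsmall] with n hn
  have hcoef : 0 < a / K - δ :=
    pos_of_mul_pos_right (hrate ▸ mul_pos (by linarith) hI) (by positivity)
  have hinfo : (1 + κ) * L n ≤ n * p n * (a / K - δ) := by
    refine le_of_mul_le_mul_right ?_ hI
    calc (1 + κ) * L n * I = (1 + ε) * K * L n * (a / K - δ) := by
          rw [mul_right_comm, ← hrate]; ring
      _ ≤ n * p n * I * (a / K - δ) := mul_le_mul_of_nonneg_right (hL n) hcoef.le
      _ = _ := by ring
  have hM : b * ⌈η n * n⌉₊ ≤ b * (η n * n + 1) :=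
    mul_le_mul_of_nonneg_left (Nat.ceil_lt_add_one (mul_nonneg (hη n) n.cast_nonneg)).le hb
  have hN : a * ((1 / K - η n) * n - 1) ≤ a * ⌊(1 / K - η n) * n⌋₊ :=
    mul_le_mul_of_nonneg_left (Nat.sub_one_lt_floor _).le ha₀.le
  have hround : p n * (b * ⌈η n * n⌉₊ - a * ⌊(1 / K - η n) * n⌋₊)
      ≤ p n * (b * (η n * n + 1) - a * ((1 / K - η n) * n - 1)) :=
    mul_le_mul_of_nonneg_left (by linarith) (hp₀ n)
  have hη' : n * p n * ((a + b) * η n) ≤ n * p n * δ :=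
    mul_le_mul_of_nonneg_left hn (mul_nonneg n.cast_nonneg (hp₀ n))
  have hp' : p n * (a + b) ≤ a + b := mul_le_of_le_one_left (by linarith) (hp₁ n)
  have hsplit : p n * (b * (η n * n + 1) - a * ((1 / K - η n) * n - 1))
      = -(n * p n * (a / K)) + n * p n * ((a + b) * η n) + p n * (a + b) := by ring
  linarith

theorem majority_vote_error_bound
    (θ : ℝ) (hθ : 0 ≤ θ ∧ θ < 1/2) (ε : ℝ) (hε : 0 < ε) (K : ℕ) (hK : 2 ≤ K)
    (m : ℕ → ℕ) (hm : Tendsto m atTop atTop)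
    (η : ℕ → ℝ) (hη : ∀ n, η n ∈ Set.Ioo (0:ℝ) (1 / (2 * K)))
    (hη0 : Tendsto η atTop (nhds 0))
    (p : ℕ → ℝ) (hp : ∀ n, p n ∈ Set.Ioo (0:ℝ) (1/2))
    (hinfo : ∀ n, (1 + ε) * K * Real.log (m n) ≤ (n : ℝ) * p n * IθQ θ)
    (Ω : ℕ → Type*) [∀ n, MeasurableSpace (Ω n)]
    (μ : ∀ n, Measure (Ω n)) [∀ n, IsProbabilityMeasure (μ n)]
    (P P' Θv : ∀ n, ℕ → Ω n → ℝ)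
    (hP : ∀ n, ∀ i < ⌊(1/(K:ℝ) - η n) * n⌋₊, Measure.map (P n i) (μ n) = bern (p n))
    (hP' : ∀ n, ∀ i < ⌈η n * n⌉₊, Measure.map (P' n i) (μ n) = bern (p n))
    (hΘ : ∀ n, ∀ i < ⌊(1/(K:ℝ) - η n) * n⌋₊, Measure.map (Θv n i) (μ n) = bern θ)
    (hindep : ∀ n, iIndepFun
      (Sum.elim (fun i : Fin ⌊(1/(K:ℝ) - η n) * n⌋₊ => P n i)
        (Sum.elim (fun i : Fin ⌈η n * n⌉₊ => P' n i)
          (fun i : Fin ⌊(1/(K:ℝ) - η n) * n⌋₊ => Θv n i))) (μ n)) :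
    Tendsto (fun n => (m n : ℝ≥0∞) * μ n {ω |
        ∑ i ∈ Finset.range ⌊(1/(K:ℝ) - η n) * n⌋₊, P n i ω * (1 - 2 * Θv n i ω)
          ≤ ∑ i ∈ Finset.range ⌈η n * n⌉₊, P' n i ω})
      atTop (nhds 0) := by
  obtain ⟨hθ₀, hθ⟩ := hθ
  have hI := IθQ_pos hθ₀ hθ
  obtain ⟨t, ht, hgap⟩ :=
    exists_lt_bernGap hθ₀ hθ.le (div_lt_self hI (by linarith : (1 : ℝ) < 1 + ε))
  have ha : IθQ θ < (1 + ε) * bernGap θ t := (div_lt_iff₀' (by linarith)).1 hgap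
  have hp₀ n : 0 ≤ p n := (hp n).1.le
  have hp₁ n : p n ≤ 1 := (hp n).2.le.trans (by norm_num)
  have hbound n : (μ n).real {ω |
        ∑ i ∈ Finset.range ⌊(1/(K:ℝ) - η n) * n⌋₊, P n i ω * (1 - 2 * Θv n i ω)
          ≤ ∑ i ∈ Finset.range ⌈η n * n⌉₊, P' n i ω}
      ≤ exp (p n * ((exp t - 1) * ⌈η n * n⌉₊ - bernGap θ t * ⌊(1/(K:ℝ) - η n) * n⌋₊)) := by
    refine (measureReal_signedVote_le_of_iIndepFun (hp₀ n) (hp₁ n) hθ₀ (by linarith) ht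
      (hP n) (hP' n) (hΘ n) (hindep n)).trans
      ((one_sub_pow_mul_one_add_pow_le_exp ?_ ?_ _ _).trans_eq ?_)
    · exact mul_le_one₀ (hp₁ n) ((div_pos hI (by linarith)).trans hgap).le
        (bernGap_le_one hθ₀ (by linarith) t)
    · exact mul_nonneg (hp₀ n) (sub_nonneg.2 (one_le_exp ht))
    · ring_nf
  obtain ⟨κ, hκ, C, hexp⟩ := eventually_signedVote_exponent_le (by omega) hI hε ha
    (sub_nonneg.2 (one_le_exp ht)) (fun n => (hη n).1.le) hη0 hp₀ hp₁ hinfo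
  have hreal := squeeze_zero (fun n => by positivity)
    (fun n => mul_le_mul_of_nonneg_left (hbound n) (by positivity))
    (tendsto_natCast_mul_exp_of_le hm hκ hexp)
  refine (ENNReal.ofReal_zero ▸ ENNReal.tendsto_ofReal hreal).congr fun n => ?_
  rw [ENNReal.ofReal_mul (by positivity), ENNReal.ofReal_natCast, ofReal_measureReal]
end
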